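/- Let h : ℝ → ℂ be measurable with ∫_ℝ h(t) dt = 1 and |h(t)| ≤ C₁(1 + |t|)^{−3} for all t ∈ ℝ. Then there exists C > 0 such that for all λ ≥ 1, | ∫_{−λ}^{λ} ∫_ℝ h(t − r) · r·tanh(πr) dr dt − λ² | ≤ Cλ. -/

import Mathlib

/-!
Write `f r = r tanh (π r)`. Since `h` is integrable against `1 + |u|` and `f` grows linearly,
Fubini turns the double integral into `∫ h(u) ψ(u) du` with `ψ(u) = ∫_{-λ}^{λ} f(t - u) dt`.
As `0 ≤ |r| - f r ≤ 1/π` and `||t - u| - |t|| ≤ |u|`, `ψ(u)` differs from `∫_{-λ}^{λ} |t| dt = λ²`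
by at most `2λ(1 + |u|)`; since `∫ h = 1`, the error is at most `2λ ∫ |h(u)| (1 + |u|) du`,
which is finite by the cubic decay of `h`.
-/

open Real MeasureTheory

@[fun_prop]
theorem Real.continuous_tanh : Continuous tanh := by
  simp_rw [funext tanh_eq_sinh_div_cosh]
  exact continuous_sinh.div continuous_cosh fun x => (cosh_pos x).ne'

theorem abs_mul_tanh_sub_abs_le {a : ℝ} (ha : 0 < a) (x : ℝ) :
    |x * tanh (a * x) - (|x|)| ≤ a⁻¹ := by
  wlog hx : 0 ≤ x generalizing x
  · simpa [tanh_neg] using this (-x) (by linarith)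
  set E := exp (a * x) with hE
  have hE0 : 0 < E := exp_pos _
  have hE1 : 1 + a * x ≤ E := by linarith [add_one_le_exp (a * x)]
  -- `1 - tanh y = 2 / (e^{2y} + 1)` and `e^{2y} ≥ 1 + 2y`
  have hgap : x - x * tanh (a * x) = 2 * x / (E ^ 2 + 1) := by
    rw [tanh_eq, exp_neg, ← hE]
    field_simp
    ring
  have hgap_le : 2 * x / (E ^ 2 + 1) ≤ a⁻¹ := by
    rw [div_le_iff₀ (by positivity), inv_mul_eq_div, le_div_iff₀ ha]
    nlinarith
  rw [abs_of_nonneg hx, abs_sub_comm, abs_of_nonneg (by rw [hgap]; positivity)]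
  linarith

theorem intervalIntegral_abs_symm {c : ℝ} (hc : 0 ≤ c) : ∫ t in -c..c, |t| = c ^ 2 := by
  have hsymm : ∫ t in -c..0, |t| = ∫ t in (0 : ℝ)..c, |t| := by
    simpa using (intervalIntegral.integral_comp_neg (a := 0) (b := c) (fun t => |t|)).symm
  have hhalf : ∫ t in (0 : ℝ)..c, |t| = c ^ 2 / 2 := by
    rw [intervalIntegral.integral_congr (f := fun t => |t|) (g := fun t => t)
      fun t ht => abs_of_nonneg ?_]
    · simp [integral_id]
    · rw [Set.uIcc_of_le hc] at ht; exact ht.1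
  rw [← intervalIntegral.integral_add_adjacent_intervals (b := 0)
    (continuous_abs.intervalIntegrable _ _) (continuous_abs.intervalIntegrable _ _), hsymm, hhalf]
  ring

theorem abs_intervalIntegral_comp_sub_sub_sq_le {f : ℝ → ℝ} (hf : Continuous f) {ε : ℝ}
    (hfε : ∀ r, |f r - (|r|)| ≤ ε) {c : ℝ} (hc : 0 ≤ c) (u : ℝ) :
    |(∫ t in -c..c, f (t - u)) - c ^ 2| ≤ 2 * c * (ε + |u|) := by
  have hpt : ∀ t, ‖f (t - u) - |t|‖ ≤ ε + |u| := fun t => by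
    have hshift : |(|t - u| - |t|)| ≤ |u| := by
      simpa using abs_abs_sub_abs_le_abs_sub (t - u) t
    calc ‖f (t - u) - |t|‖ = |(f (t - u) - |t - u|) + (|t - u| - |t|)| := by
          rw [Real.norm_eq_abs]; ring_nf
      _ ≤ ε + |u| := (abs_add_le _ _).trans (add_le_add (hfε _) hshift)
  have hint :=
    intervalIntegral.norm_integral_le_of_norm_le_const (a := -c) (b := c) fun t _ => hpt t
  have hfu : Continuous fun t => f (t - u) := by fun_prop
  rw [intervalIntegral.integral_sub (hfu.intervalIntegrable _ _)
      (continuous_abs.intervalIntegrable _ _), intervalIntegral_abs_symm hc,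
    Real.norm_eq_abs, sub_neg_eq_add, abs_of_nonneg (by linarith : 0 ≤ c + c)] at hint
  linarith

theorem integrable_norm_mul_one_add_abs {E : Type*} [NormedAddCommGroup E] {h : ℝ → E}
    (hh : AEStronglyMeasurable h) {C : ℝ} {n : ℤ} (hn : 2 < n)
    (hdecay : ∀ t, ‖h t‖ ≤ C * (1 + |t|) ^ (-n)) :
    Integrable fun t => ‖h t‖ * (1 + |t|) := by
  have hdom : Integrable fun t : ℝ => C * (1 + |t|) ^ (-((n - 1 : ℤ) : ℝ)) := by
    have := integrable_one_add_norm (E := ℝ) (μ := volume) (r := ((n - 1 : ℤ) : ℝ))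
      (by simp only [Module.finrank_self]; exact_mod_cast (by omega : (1 : ℤ) < n - 1))
    simpa using this.const_mul C
  have hmeas : AEStronglyMeasurable fun t => ‖h t‖ * (1 + |t|) :=
    hh.norm.mul (by fun_prop : Continuous fun t : ℝ => 1 + |t|).aestronglyMeasurable
  refine hdom.mono' hmeas (.of_forall fun t => ?_)
  have hpos : 0 < 1 + |t| := by positivity
  rw [Real.rpow_neg hpos.le, Real.rpow_intCast, ← zpow_neg, Real.norm_of_nonneg (by positivity)]
  calc ‖h t‖ * (1 + |t|) ≤ C * (1 + |t|) ^ (-n) * (1 + |t|) := by gcongr; exact hdecay t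
    _ = C * (1 + |t|) ^ (-(n - 1)) := by
      rw [mul_assoc, ← zpow_add_one₀ hpos.ne']; ring_nf

section

variable {𝕜 : Type*} [RCLike 𝕜]

theorem intervalIntegral_integral_mul_comp_sub {h g : ℝ → 𝕜} (hh : AEStronglyMeasurable h)
    (hh1 : Integrable fun u => ‖h u‖ * (1 + |u|)) (hg : Continuous g) {K : ℝ}
    (hgK : ∀ r, ‖g r‖ ≤ K * (1 + |r|)) (a b : ℝ) :
    ∫ t in a..b, ∫ s, h (t - s) * g s = ∫ u, h u * ∫ t in a..b, g (t - u) := by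
  wlog hab : a ≤ b generalizing a b
  · rw [intervalIntegral.integral_symm, this b a (le_of_not_ge hab), ← integral_neg]
    simp_rw [intervalIntegral.integral_symm b a, mul_neg]
  set μ := volume.restrict (Set.Ioc a b)
  have hK : 0 ≤ K := by simpa using (norm_nonneg _).trans (hgK 0)
  have hF : Integrable (fun p : ℝ × ℝ => h p.2 * g (p.1 - p.2)) (μ.prod volume) := by
    have hmeas : AEStronglyMeasurable (fun p : ℝ × ℝ => h p.2 * g (p.1 - p.2)) (μ.prod volume) :=
      hh.comp_snd.mul (by fun_prop : Continuous fun p : ℝ × ℝ => g (p.1 - p.2)).aestronglyMeasurable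
    refine ((integrable_const (K * (1 + |a| + |b|))).mul_prod hh1).mono' hmeas ?_
    filter_upwards [Measure.quasiMeasurePreserving_fst.ae (ae_restrict_mem measurableSet_Ioc)]
      with p hp
    have ht : |p.1| ≤ |a| + |b| := abs_le.mpr
      ⟨by linarith [neg_abs_le a, abs_nonneg b, hp.1],
        by linarith [le_abs_self b, abs_nonneg a, hp.2]⟩
    have hgrowth : 1 + |p.1 - p.2| ≤ (1 + |a| + |b|) * (1 + |p.2|) := by
      nlinarith [abs_sub p.1 p.2, abs_nonneg a, abs_nonneg b, abs_nonneg p.2]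
    calc ‖h p.2 * g (p.1 - p.2)‖ ≤ ‖h p.2‖ * (K * (1 + |p.1 - p.2|)) := by
          rw [norm_mul]; gcongr; exact hgK _
      _ ≤ ‖h p.2‖ * (K * ((1 + |a| + |b|) * (1 + |p.2|))) := by gcongr
      _ = K * (1 + |a| + |b|) * (‖h p.2‖ * (1 + |p.2|)) := by ring
  calc ∫ t in a..b, ∫ s, h (t - s) * g s
      = ∫ t, (∫ u, h u * g (t - u)) ∂μ := by
        rw [intervalIntegral.integral_of_le hab]
        congr 1 with t
        simpa using integral_sub_left_eq_self (fun u => h u * g (t - u)) volume t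
    _ = ∫ u, ∫ t, h u * g (t - u) ∂μ := integral_integral_swap hF
    _ = ∫ u, h u * ∫ t in a..b, g (t - u) := by
        congr 1 with u
        rw [integral_const_mul, intervalIntegral.integral_of_le hab]

theorem norm_integral_mul_sub_le {h : ℝ → 𝕜} {ψ : ℝ → ℝ} (hh : Integrable h)
    (hint : ∫ u, h u = 1) (hh1 : Integrable fun u => ‖h u‖ * (1 + |u|))
    (hψ : AEStronglyMeasurable ψ) {c B : ℝ} (hψc : ∀ u, |ψ u - c| ≤ B * (1 + |u|)) :
    ‖(∫ u, h u * ψ u) - c‖ ≤ B * ∫ u, ‖h u‖ * (1 + |u|) := by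
  have hbound : ∀ u, ‖h u * ((ψ u - c : ℝ) : 𝕜)‖ ≤ B * (‖h u‖ * (1 + |u|)) := fun u => by
    rw [norm_mul, RCLike.norm_ofReal]
    calc ‖h u‖ * |ψ u - c| ≤ ‖h u‖ * (B * (1 + |u|)) := by gcongr; exact hψc u
      _ = B * (‖h u‖ * (1 + |u|)) := by ring
  have hmeas : AEStronglyMeasurable fun u => h u * ((ψ u - c : ℝ) : 𝕜) :=
    hh.aestronglyMeasurable.mul
      (RCLike.continuous_ofReal.comp_aestronglyMeasurable (hψ.sub aestronglyMeasurable_const))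
  have hdiff : Integrable fun u => h u * ((ψ u - c : ℝ) : 𝕜) :=
    (hh1.const_mul B).mono' hmeas (.of_forall hbound)
  have hsplit : ∫ u, h u * ψ u = (∫ u, h u * ((ψ u - c : ℝ) : 𝕜)) + c := by
    rw [← mul_one (c : 𝕜), ← hint, ← integral_const_mul, ← integral_add hdiff (hh.const_mul _)]
    congr 1 with u
    push_cast; ring
  rw [hsplit, add_sub_cancel_right, ← integral_const_mul]
  exact norm_integral_le_of_norm_le (hh1.const_mul B) (Filter.Eventually.of_forall hbound)

end

/-- Smoothing the Plancherel density `r tanh(π r)` against an integrable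
kernel of total integral one with cubic decay:
`∫_{-λ}^{λ} ∫_ℝ h(t-r) r tanh(π r) dr dt = λ² + O(λ)`. -/
theorem smoothed_plancherel_integral (h : ℝ → ℂ) (hmeas : Measurable h)
    (hint : (∫ t : ℝ, h t) = 1) (C₁ : ℝ)
    (hdecay : ∀ t : ℝ, ‖h t‖ ≤ C₁ * (1 + |t|) ^ (-3 : ℤ)) :
    ∃ C : ℝ, 0 < C ∧ ∀ lam : ℝ, 1 ≤ lam →
      ‖(∫ t in (-lam)..lam,
          ∫ s : ℝ, h (t - s) * ((s * Real.tanh (π * s) : ℝ) : ℂ))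
        - ((lam : ℂ) ^ 2)‖ ≤ C * lam := by
  have hh1 := integrable_norm_mul_one_add_abs hmeas.aestronglyMeasurable (by norm_num) hdecay
  have hh : Integrable h := hh1.mono' hmeas.aestronglyMeasurable <| .of_forall fun u =>
    le_mul_of_one_le_right (norm_nonneg _) (by simp)
  set f : ℝ → ℝ := fun s => s * tanh (π * s)
  have hf : Continuous f := by simp only [f]; fun_prop
  have hf_le : ∀ r, ‖(f r : ℂ)‖ ≤ 1 * (1 + |r|) := fun r => by
    rw [Complex.norm_real, Real.norm_eq_abs, abs_mul, one_mul]
    nlinarith [(abs_tanh_lt_one (π * r)).le, abs_nonneg r]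
  have hf_abs : ∀ r, |f r - (|r|)| ≤ 1 := fun r =>
    (abs_mul_tanh_sub_abs_le pi_pos r).trans (inv_le_one_of_one_le₀ (by linarith [pi_gt_three]))
  have hI : 0 ≤ ∫ u, ‖h u‖ * (1 + |u|) := integral_nonneg fun u => by positivity
  refine ⟨2 * (∫ u, ‖h u‖ * (1 + |u|)) + 1, by positivity, fun lam hlam => ?_⟩
  rw [intervalIntegral_integral_mul_comp_sub hmeas.aestronglyMeasurable hh1 (by fun_prop) hf_le]
  simp_rw [intervalIntegral.integral_ofReal]
  have hψ : Continuous fun u => ∫ t in -lam..lam, f (t - u) :=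
    intervalIntegral.continuous_parametric_intervalIntegral_of_continuous' (by fun_prop) _ _
  have herror := norm_integral_mul_sub_le hh hint hh1 hψ.aestronglyMeasurable (c := lam ^ 2)
    fun u => abs_intervalIntegral_comp_sub_sub_sq_le hf hf_abs (by linarith) u
  push_cast at herror
  exact herror.trans (by linarith)
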